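/- arXiv:2104.13678 — 7 statements merged into one kernel-verified Lean document; each statement's English description precedes it below -/
import Mathlib

section
/- Let r = Σ aᵢ ⊗ bᵢ ∈ A ⊗ A be a solution of the associative Yang–Baxter equation of weight λ, i.e., r₁₃r₁₂ - r₁₂r₂₃ + r₂₃r₁₃ = λ r₁₃ in A ⊗ A ⊗ A. Then the linear map P_r : A → A defined by P_r(x) = Σ aᵢ x bᵢ is a Rota–Baxter operator of weight -λ on A. -/
/-!
Evaluate the associative Yang–Baxter equation along `u ⊗ v ⊗ w ↦ u x v y w`. The four
terms `r₁₃r₁₂`, `r₁₂r₂₃`, `r₂₃r₁₃` and `r₁₃` become `P(P(x)y)`, `P(x)P(y)`, `P(xP(y))` and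
`P(xy)`, so the equation turns into `P(P(x)y) - P(x)P(y) + P(xP(y)) = λ P(xy)`, which is the
Rota–Baxter identity of weight `-λ`.
-/

open scoped TensorProduct

namespace AssociativeYangBaxter

variable {R A : Type*} [CommSemiring R] [Semiring A] [Algebra R A] {m : ℕ}

variable (R) in
def sandwich (a b : Fin m → A) : A →ₗ[R] A where
  toFun x := ∑ i, a i * x * b i
  map_add' x y := by simp only [mul_add, add_mul, Finset.sum_add_distrib]
  map_smul' c x := by simp only [mul_smul_comm, smul_mul_assoc, Finset.smul_sum, RingHom.id_apply]

theorem sandwich_apply (a b : Fin m → A) (x : A) :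
    sandwich R a b x = ∑ i, a i * x * b i :=
  rfl

variable (R) in
/-- `u ⊗ v ⊗ w ↦ u x v y w`. -/
def insertMul (x y : A) : A ⊗[R] (A ⊗[R] A) →ₗ[R] A :=
  TensorProduct.lift ((LinearMap.mul R A).compl₂
    (TensorProduct.lift (((LinearMap.mul R A).comp (LinearMap.mulLeft R x)).compl₂
      (LinearMap.mulLeft R y))))

@[simp]
theorem insertMul_tmul (x y u v w : A) :
    insertMul R x y (u ⊗ₜ (v ⊗ₜ w)) = u * x * v * y * w := by
  simp [insertMul, mul_assoc]

variable (a b : Fin m → A) (x y : A)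

theorem insertMul_r13_r12 :
    insertMul R x y (∑ i, ∑ j, (a i * a j) ⊗ₜ[R] (b j ⊗ₜ[R] b i)) =
      sandwich R a b (sandwich R a b x * y) := by
  simp [sandwich_apply, Finset.sum_mul, mul_assoc]
  exact Finset.sum_comm

theorem insertMul_r12_r23 :
    insertMul R x y (∑ i, ∑ j, a i ⊗ₜ[R] ((b i * a j) ⊗ₜ[R] b j)) =
      sandwich R a b x * sandwich R a b y := by
  simp [sandwich_apply, Finset.sum_mul_sum, mul_assoc]

theorem insertMul_r23_r13 :
    insertMul R x y (∑ i, ∑ j, a j ⊗ₜ[R] (a i ⊗ₜ[R] (b i * b j))) =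
      sandwich R a b (x * sandwich R a b y) := by
  simp [sandwich_apply, Finset.mul_sum, mul_assoc]

theorem insertMul_r13 :
    insertMul R x y (∑ i, a i ⊗ₜ[R] ((1 : A) ⊗ₜ[R] b i)) = sandwich R a b (x * y) := by
  simp [sandwich_apply, mul_assoc]

end AssociativeYangBaxter

open AssociativeYangBaxter in
/-- If `r = Σ aᵢ ⊗ bᵢ` is a solution of the associative Yang–Baxter equation of
weight `lam`, i.e. `r₁₃r₁₂ - r₁₂r₂₃ + r₂₃r₁₃ = lam • r₁₃` in `A ⊗ A ⊗ A`, then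
`P_r : x ↦ Σ aᵢ x bᵢ` is a Rota–Baxter operator of weight `-lam` on `A`. -/
theorem aybe_weighted_gives_rb {F A : Type*} [Field F] [Ring A] [Algebra F A]
    (lam : F) {m : ℕ} (a b : Fin m → A)
    (hAYBE :
      (∑ i, ∑ j, (a i * a j) ⊗ₜ[F] ((b j) ⊗ₜ[F] (b i)))
        - (∑ i, ∑ j, (a i) ⊗ₜ[F] ((b i * a j) ⊗ₜ[F] (b j)))
        + (∑ i, ∑ j, (a j) ⊗ₜ[F] ((a i) ⊗ₜ[F] (b i * b j)))
      = lam • ∑ i, (a i) ⊗ₜ[F] ((1 : A) ⊗ₜ[F] (b i))) :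
    ∀ x y : A,
      (∑ i, a i * x * b i) * (∑ i, a i * y * b i) =
        ∑ i, a i * ((∑ j, a j * x * b j) * y + x * (∑ j, a j * y * b j)
            + (-lam) • (x * y)) * b i := by
  intro x y
  have h := congrArg (insertMul F x y) hAYBE
  rw [map_add, map_sub, map_smul, insertMul_r13_r12, insertMul_r12_r23, insertMul_r23_r13,
    insertMul_r13] at h
  change sandwich F a b x * sandwich F a b y =
    sandwich F a b (sandwich F a b x * y + x * sandwich F a b y + (-lam) • (x * y))
  rw [map_add, map_add, map_smul, neg_smul, ← h]
  abel
end

section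
/- Let (A, ω) be a quadratic algebra (ω a non-degenerate symmetric invariant bilinear form: ω(xy,z) = ω(x,yz)) and R a linear operator on A. Define Q on D_R(A) by Q(a + b̄, c + d̄) = ω(a,d) + ω(b,c). If R is a Rota–Baxter operator of weight λ, then Q is invariant (Q(uv,w) = Q(u,vw)) if and only if R(ab) + R*(ab) + λab = 0 for all a,b ∈ A, where R* is the adjoint of R with respect to ω. -/
/-- The product of the double `D_R(A) = A ⊕ Ā`, where a pair `(a, b)`
represents `a + b̄`. -/
def dmul {F A : Type*} [Field F] [NonUnitalNonAssocRing A] [Module F A]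
    (lam : F) (R : A →ₗ[F] A) (p q : A × A) : A × A :=
  (p.1 * q.1 + R (p.1 * q.2) - p.1 * R q.2 + R (p.2 * q.1) - R p.2 * q.1,
   p.1 * q.2 + p.2 * q.1 - R p.2 * q.2 - p.2 * R q.2 - lam • (p.2 * q.2))

/-!
Write `N = R + R* + λ·id`. Expanding both sides with invariance and symmetry of `ω` and the
adjunction `ω(R x, y) = ω(x, R* y)`, almost everything cancels and the failure of invariance of
`Q` is
`Q(uv, w) - Q(u, vw) = ω(N(a d + b c), f) - ω(b, N(c f + d e))`
for `u = a + b̄`, `v = c + d̄`, `w = e + f̄`. So `Q` is invariant as soon as `N` kills products,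
and conversely `u = a`, `v = d̄`, `w = f̄` leaves `ω(N(a d), f) = 0` for all `f`, whence
`N(a d) = 0` by non-degeneracy.
-/

def doubleForm {F A : Type*} [Field F] [NonUnitalNonAssocRing A] [Module F A]
    (ω : A →ₗ[F] A →ₗ[F] F) (p q : A × A) : F :=
  ω p.1 q.2 + ω p.2 q.1

def adjointSum {F A : Type*} [Field F] [NonUnitalNonAssocRing A] [Module F A]
    (lam : F) (R Rs : A →ₗ[F] A) : A →ₗ[F] A :=
  R + Rs + lam • LinearMap.id

section

variable {F A : Type*} [Field F] [NonUnitalNonAssocRing A] [Module F A]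
  {ω : A →ₗ[F] A →ₗ[F] F} {R Rs : A →ₗ[F] A}

lemma adjointSum_apply (lam : F) (x : A) :
    adjointSum lam R Rs x = R x + Rs x + lam • x :=
  rfl

lemma apply_adjoint_right_of_symm (hsym : ∀ x y : A, ω x y = ω y x)
    (hadj : ∀ x y : A, ω (R x) y = ω x (Rs y)) (x y : A) :
    ω x (R y) = ω (Rs x) y := by
  rw [hsym, hadj, hsym]

lemma doubleForm_dmul_sub_doubleForm_dmul (lam : F)
    (hsym : ∀ x y : A, ω x y = ω y x)
    (hinv : ∀ x y z : A, ω (x * y) z = ω x (y * z))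
    (hadj : ∀ x y : A, ω (R x) y = ω x (Rs y)) (u v w : A × A) :
    doubleForm ω (dmul lam R u v) w - doubleForm ω u (dmul lam R v w) =
      ω (adjointSum lam R Rs (u.1 * v.2 + u.2 * v.1)) w.2 -
        ω u.2 (adjointSum lam R Rs (v.1 * w.2 + v.2 * w.1)) := by
  obtain ⟨a, b⟩ := u
  obtain ⟨c, d⟩ := v
  obtain ⟨e, f⟩ := w
  have hadj' := apply_adjoint_right_of_symm hsym hadj
  simp only [doubleForm, dmul, adjointSum_apply, map_add, map_sub, map_smul,
    LinearMap.add_apply, LinearMap.sub_apply, LinearMap.smul_apply, smul_eq_mul]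
  linear_combination hinv a c f + hinv a d e + hinv b c e - hinv a (R d) f - hinv b (R d) e
    - hinv (R b) c f - hinv (R b) d e - hadj b (c * f) - hadj b (d * e)
    - hinv a d (R f) - hinv b c (R f) + hadj' (a * d) f + hadj' (b * c) f
    - lam * hinv a d f - lam * hinv b c f - lam * hinv b d e

end

theorem double_form_invariant_iff_general {F A : Type*} [Field F]
    [NonUnitalNonAssocRing A] [Module F A]
    (lam : F) (ω : A →ₗ[F] A →ₗ[F] F)
    (hsym : ∀ x y : A, ω x y = ω y x)
    (hinv : ∀ x y z : A, ω (x * y) z = ω x (y * z))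
    (hnd : ∀ x : A, (∀ y : A, ω x y = 0) → x = 0)
    (R Rs : A →ₗ[F] A)
    (hadj : ∀ x y : A, ω (R x) y = ω x (Rs y)) :
    (∀ u v w : A × A,
        ω (dmul lam R u v).1 w.2 + ω (dmul lam R u v).2 w.1 =
          ω u.1 (dmul lam R v w).2 + ω u.2 (dmul lam R v w).1)
      ↔ (∀ a b : A, R (a * b) + Rs (a * b) + lam • (a * b) = 0) := by
  have defect := doubleForm_dmul_sub_doubleForm_dmul lam hsym hinv hadj
  constructor
  · intro hQ a d
    refine hnd _ fun f => ?_
    have h := defect (a, 0) (0, d) (0, f)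
    rw [doubleForm, doubleForm, hQ] at h
    simpa [adjointSum_apply] using h.symm
  · intro hN u v w
    have hN' : ∀ x y z t : A, adjointSum lam R Rs (x * y + z * t) = 0 := fun x y z t => by
      rw [map_add, adjointSum_apply, adjointSum_apply, hN, hN, add_zero]
    have h := defect u v w
    rwa [hN', hN', map_zero, LinearMap.zero_apply, map_zero, sub_zero, sub_eq_zero] at h

/-- Let `(A, ω)` be a quadratic algebra (`ω` non-degenerate, symmetric, invariant),
`R` a Rota–Baxter operator of weight `lam` on `A` with adjoint `Rs`, and define
`Q(a + b̄, c + d̄) = ω(a,d) + ω(b,c)` on `D_R(A)`. Then `Q` is invariant iff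
`R(ab) + R*(ab) + λ·ab = 0` for all `a,b ∈ A`. -/
theorem double_form_invariant_iff {F A : Type*} [Field F]
    [NonUnitalNonAssocRing A] [Module F A]
    (lam : F) (ω : A →ₗ[F] A →ₗ[F] F)
    (hsym : ∀ x y : A, ω x y = ω y x)
    (hinv : ∀ x y z : A, ω (x * y) z = ω x (y * z))
    (hnd : ∀ x : A, (∀ y : A, ω x y = 0) → x = 0)
    (R Rs : A →ₗ[F] A)
    (hadj : ∀ x y : A, ω (R x) y = ω x (Rs y))
    (hR : ∀ x y : A, R x * R y = R (R x * y + x * R y + lam • (x * y))) :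
    (∀ u v w : A × A,
        ω (dmul lam R u v).1 w.2 + ω (dmul lam R u v).2 w.1 =
          ω u.1 (dmul lam R v w).2 + ω u.2 (dmul lam R v w).1)
      ↔ (∀ a b : A, R (a * b) + Rs (a * b) + lam • (a * b) = 0) :=
  double_form_invariant_iff_general lam ω hsym hinv hnd R Rs hadj
end

section
/- There is no Rota–Baxter operator R of weight 1 on the matrix algebra Mₙ(F) (F a field of characteristic 0) satisfying R + R* + id = 0, where R* is the adjoint of R with respect to the trace form ω(x,y) = tr(xy). -/
/-!
Put `B = 2R + 1`. The weight-one Rota–Baxter identity becomes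
`B (B x * y + x * B y) = B x * B y + x * y`, and `R + R* + 1 = 0` says that `B` is skew for the
trace form. In `Mₙ ⊗ Mₙ` consider the r-matrix `r = ∑ B(E_ca) ⊗ E_ac` of `B` and the flip `P`.
The first identity gives `r² = -1` and skewness gives `r P = -P r`, so `P` is conjugate to `-P`
and `tr P = 0`; but `tr P = n`.
-/

open Matrix

theorem modifiedRotaBaxter_of_rotaBaxter {A : Type*} [Ring A] (R B : A →+ A)
    (hB : ∀ x, B x = 2 • R x + x) (hR : ∀ x y, R x * R y = R (R x * y + x * R y + x * y))
    (x y : A) : B (B x * y + x * B y) = B x * B y + x * y := by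
  have hz : B x * y + x * B y =
      (R x * y + x * R y + x * y) + (R x * y + x * R y + x * y) := by
    rw [hB, hB]; noncomm_ring
  rw [hz, hB, map_add, ← hR, hB, hB]
  noncomm_ring

namespace Matrix

variable {m R : Type*} [Fintype m] [DecidableEq m] [CommRing R]

theorem trace_eq_neg_of_mul_eq_neg_mul {r P : Matrix m m R} (hr : IsUnit r)
    (h : r * P = -(P * r)) : P.trace = -P.trace := by
  have hdet : IsUnit r.det := (isUnit_iff_isUnit_det r).mp hr
  calc P.trace = (r * P * r⁻¹).trace := (trace_conj hr P).symm
    _ = -P.trace := by rw [h, neg_mul, mul_assoc, mul_nonsing_inv _ hdet, mul_one, trace_neg]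

theorem trace_toMatrix_prodComm :
    ((Equiv.prodComm m m).toPEquiv.toMatrix : Matrix (m × m) (m × m) R).trace =
      Fintype.card m := by
  rw [trace, Fintype.sum_prod_type]
  simp [PEquiv.toMatrix_apply, Prod.ext_iff, eq_comm]

theorem sum_single_mul_single (a c : m) :
    ∑ b, single b a (1 : R) * single c b 1 = if a = c then 1 else 0 := by
  by_cases h : a = c
  · subst h
    ext p q
    simp [sum_apply, single_apply, one_apply, ite_and, eq_comm]
  · simp [h]

variable (B : Matrix m m R →ₗ[R] Matrix m m R)

/-- The r-matrix `∑ B(E_ca) ⊗ E_ac` of `B`, with `Mₙ ⊗ Mₙ` realised as matrices indexed by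
pairs. -/
def rMatrix : Matrix (m × m) (m × m) R := of fun x y => B (single y.2 x.2 1) x.1 y.1

theorem apply_single_add_apply_single_eq_zero
    (hskew : ∀ x y, (B x * y).trace + (x * B y).trace = 0) (a c p q : m) :
    B (single c p 1) a q + B (single q a 1) p c = 0 := by
  simpa [trace_mul_single, trace_single_mul] using hskew (single c p 1) (single q a 1)

theorem rMatrix_mul_toMatrix_prodComm
    (hskew : ∀ x y, (B x * y).trace + (x * B y).trace = 0) :
    rMatrix B * (Equiv.prodComm m m).toPEquiv.toMatrix =
      -((Equiv.prodComm m m).toPEquiv.toMatrix * rMatrix B) := by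
  ext ⟨p, a⟩ ⟨q, c⟩
  simp only [PEquiv.toMatrix_toPEquiv_mul, PEquiv.mul_toMatrix_toPEquiv, neg_apply,
    submatrix_apply, rMatrix, of_apply, Equiv.prodComm_apply, Equiv.prodComm_symm, Prod.swap, id]
  exact eq_neg_of_add_eq_zero_right (apply_single_add_apply_single_eq_zero B hskew a c p q)

theorem sum_apply_single_mul_add_single_mul_apply
    (hskew : ∀ x y, (B x * y).trace + (x * B y).trace = 0) (a c : m) :
    ∑ b, (B (single b a 1) * single c b 1 + single b a 1 * B (single c b 1)) = 0 := by
  ext p q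
  simp [sum_apply, mul_apply, single_apply, ite_and, Finset.sum_add_distrib,
    apply_single_add_apply_single_eq_zero B hskew]

theorem sum_apply_single_mul_apply_single
    (hmod : ∀ x y, B (B x * y + x * B y) = B x * B y + x * y)
    (hskew : ∀ x y, (B x * y).trace + (x * B y).trace = 0) (a c : m) :
    ∑ b, B (single b a 1) * B (single c b 1) = if a = c then -1 else 0 := by
  have hterm : ∀ b, B (single b a 1) * B (single c b 1) =
      B (B (single b a 1) * single c b 1 + single b a 1 * B (single c b 1)) -
        single b a 1 * single c b 1 := fun b => by rw [hmod]; abel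
  rw [Finset.sum_congr rfl fun b _ => hterm b, Finset.sum_sub_distrib, ← map_sum,
    sum_apply_single_mul_add_single_mul_apply B hskew, sum_single_mul_single, map_zero]
  split_ifs <;> simp

theorem rMatrix_mul_self
    (hmod : ∀ x y, B (B x * y + x * B y) = B x * B y + x * y)
    (hskew : ∀ x y, (B x * y).trace + (x * B y).trace = 0) :
    rMatrix B * rMatrix B = -1 := by
  ext ⟨p, a⟩ ⟨q, c⟩
  rw [mul_apply, Fintype.sum_prod_type, Finset.sum_comm]
  simp only [rMatrix, of_apply]
  simp_rw [← mul_apply, ← sum_apply, sum_apply_single_mul_apply_single B hmod hskew]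
  by_cases h : a = c <;> simp [h, one_apply, Prod.ext_iff]

theorem card_eq_zero_of_modifiedRotaBaxter_of_skew [NoZeroDivisors R] [CharZero R]
    (hmod : ∀ x y, B (B x * y + x * B y) = B x * B y + x * y)
    (hskew : ∀ x y, (B x * y).trace + (x * B y).trace = 0) :
    Fintype.card m = 0 := by
  have hunit : IsUnit (rMatrix B) :=
    IsUnit.of_mul_eq_one (-rMatrix B) (by rw [mul_neg, rMatrix_mul_self B hmod hskew, neg_neg])
  have htrace := trace_eq_neg_of_mul_eq_neg_mul hunit (rMatrix_mul_toMatrix_prodComm B hskew)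
  rw [trace_toMatrix_prodComm, self_eq_neg] at htrace
  exact_mod_cast htrace

end Matrix

/-- There is no Rota–Baxter operator `R` of weight `1` on `Mₙ(F)` (char F = 0, n ≥ 1)
satisfying `R + R* + id = 0`, where `R*` is the adjoint with respect to the trace
form `ω(x,y) = tr(xy)`. -/
theorem no_skew_rb_weight_one_on_matrices {F : Type*} [Field F] [CharZero F]
    {n : ℕ} (hn : 0 < n)
    (R Rs : Matrix (Fin n) (Fin n) F →ₗ[F] Matrix (Fin n) (Fin n) F)
    (hRB : ∀ x y, R x * R y = R (R x * y + x * R y + x * y))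
    (hadj : ∀ x y, (R x * y).trace = (x * Rs y).trace)
    (hskew : ∀ x, R x + Rs x + x = 0) :
    False := by
  set B := 2 • R + LinearMap.id
  have hBR : ∀ x, B x = 2 • R x + x := fun x => rfl
  have hmod := modifiedRotaBaxter_of_rotaBaxter R.toAddMonoidHom B.toAddMonoidHom hBR hRB
  have hskewB : ∀ x y, (B x * y).trace + (x * B y).trace = 0 := by
    intro x y
    have h := congrArg (fun z => (x * z).trace) (hskew y)
    simp only [mul_add, mul_zero, trace_add, trace_zero] at h
    simp only [hBR, add_mul, mul_add, smul_mul, mul_smul_comm, trace_add, trace_smul, hadj]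
    linear_combination (2 : F) * h
  have hcard := Matrix.card_eq_zero_of_modifiedRotaBaxter_of_skew B hmod hskewB
  rw [Fintype.card_fin] at hcard
  omega
end

section
/- Let (A, ω) be a unital quadratic algebra with tr(a) := ω(a,1), and let R be a λ-skew-symmetric Rota–Baxter operator of weight λ on A, i.e., R(a) + R*(a) + λa = λtr(a)·1 for all a. Then R* is also a λ-skew-symmetric Rota–Baxter operator of weight λ on A. -/
/-!
Skew-symmetry gives `R* a = λ tr(a) 1 - R a - λ a`. Substituting this into the Rota–Baxter
identity of `R` yields `R (R* y · z) = R (y · R z) + R* y · R z + λ y · R z`. Pairing with an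
arbitrary `z`, invariance of `ω` turns both `R* x · R* y` and
`R* (R* x · y + x · R* y + λ x y)` into `ω (x, R (R* y · z))`, and nondegeneracy concludes.
-/

section

variable {F A : Type*} [CommRing F] [Ring A] [Algebra F A]

theorem rotaBaxter_map_mul_of_eq_smul_one_sub {lam c : F} {R : A →ₗ[F] A}
    (hRB : ∀ x y : A, R x * R y = R (R x * y + x * R y + lam • (x * y)))
    {y y' : A} (hy' : y' = c • (1 : A) - R y - lam • y) (z : A) :
    R (y' * z) = R (y * R z) + y' * R z + lam • (y * R z) := by
  subst hy'
  have hyz := hRB y z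
  simp only [map_add, map_smul] at hyz
  simp only [sub_mul, smul_mul_assoc, one_mul, map_sub, map_smul, hyz]
  abel

variable {ω : A →ₗ[F] A →ₗ[F] F}

theorem eq_of_forall_pairing_eq (hnd : ∀ x : A, (∀ y : A, ω x y = 0) → x = 0) {a b : A}
    (h : ∀ z : A, ω a z = ω b z) : a = b :=
  sub_eq_zero.mp <| hnd _ fun z => by rw [map_sub, LinearMap.sub_apply, h, sub_self]

theorem adjoint_swap_of_symm (hsym : ∀ x y : A, ω x y = ω y x) {R Rs : A →ₗ[F] A}
    (hadj : ∀ x y : A, ω (R x) y = ω x (Rs y)) (x y : A) :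
    ω (Rs x) y = ω x (R y) := by
  rw [hsym, ← hadj, hsym]

theorem adjoint_rotaBaxter (hinv : ∀ x y z : A, ω (x * y) z = ω x (y * z))
    (hnd : ∀ x : A, (∀ y : A, ω x y = 0) → x = 0) {lam : F} {R Rs : A →ₗ[F] A}
    (hadj : ∀ x y : A, ω (Rs x) y = ω x (R y))
    (hR : ∀ y z : A, R (Rs y * z) = R (y * R z) + Rs y * R z + lam • (y * R z)) (x y : A) :
    Rs x * Rs y = Rs (Rs x * y + x * Rs y + lam • (x * y)) := by
  refine eq_of_forall_pairing_eq hnd fun z => ?_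
  calc ω (Rs x * Rs y) z = ω x (R (Rs y * z)) := by rw [hinv, hadj]
    _ = ω (Rs (Rs x * y + x * Rs y + lam • (x * y))) z := by
      simp only [hadj, hR, map_add, map_smul, LinearMap.add_apply, LinearMap.smul_apply]
      rw [hinv (Rs x), hadj, hinv x (Rs y), hinv x y]

end

/-- Let `(A, ω)` be a unital quadratic algebra with `tr a := ω(a,1)`, and let `R`
be a `λ`-skew-symmetric Rota–Baxter operator of weight `λ` on `A`, i.e.
`R a + R* a + λa = λ tr(a) 1`. Then `R*` is also a `λ`-skew-symmetric
Rota–Baxter operator of weight `λ` on `A` (its adjoint being `R`). -/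
theorem adjoint_of_lam_skew_rb_is_rb {F A : Type*} [Field F] [Ring A] [Algebra F A]
    (lam : F) (ω : A →ₗ[F] A →ₗ[F] F)
    (hsym : ∀ x y : A, ω x y = ω y x)
    (hinv : ∀ x y z : A, ω (x * y) z = ω x (y * z))
    (hnd : ∀ x : A, (∀ y : A, ω x y = 0) → x = 0)
    (R Rs : A →ₗ[F] A)
    (hadj : ∀ x y : A, ω (R x) y = ω x (Rs y))
    (hRB : ∀ x y : A, R x * R y = R (R x * y + x * R y + lam • (x * y)))
    (hskew : ∀ a : A, R a + Rs a + lam • a = (lam * ω a 1) • (1 : A)) :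
    (∀ x y : A, ω (Rs x) y = ω x (R y)) ∧
    (∀ x y : A, Rs x * Rs y = Rs (Rs x * y + x * Rs y + lam • (x * y))) ∧
    (∀ a : A, Rs a + R a + lam • a = (lam * ω a 1) • (1 : A)) := by
  have hadj' := adjoint_swap_of_symm hsym hadj
  have hRs (a : A) : Rs a = (lam * ω a 1) • (1 : A) - R a - lam • a := by
    rw [← hskew a]; abel
  refine ⟨hadj', adjoint_rotaBaxter hinv hnd hadj' fun y =>
    rotaBaxter_map_mul_of_eq_smul_one_sub hRB (hRs y), fun a => ?_⟩
  rw [← hskew a]; abel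
end

section
/- Let R be a λ-skew-symmetric Rota–Baxter operator of weight λ ≠ 0 on Mₙ(F) (char F = 0) and set I₂' = ker(R + λ·id). Then I₂' contains no nonzero idempotent; in particular, I₂' is a nil (nilpotent) ideal of the subalgebra R(Mₙ(F)). -/
/-!
Write `K = ker (R + λ • id)`. The Rota–Baxter identity alone makes `K` stable under
multiplication by `R(Mₙ(F))` on either side, and (as `λ ≠ 0`) closed under multiplication.
Skew-symmetry gives `R* = λ tr(·) • 1` on `K`, so the adjoint relation turns into
`tr (u v) = - tr u · tr v` for `u, v ∈ K`. An idempotent `e ∈ K` then has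
`tr e = -(tr e)²`; as `tr e` is the rank of `e`, a natural number, characteristic zero
forces `tr e = 0`, hence `e = 0`. Finally, for any `x` in a finite-dimensional algebra the
decomposition `minpoly x = X ^ r * q` with `X ∤ q` yields an idempotent `e = p(x)`, with `p`
having no constant term, such that `x ^ (r + 1) = e * x ^ (r + 1)`; inside `K` this `e` must
vanish, so `x` is nilpotent.
-/

open Polynomial

section RotaBaxter

variable {F A : Type*} [Field F] [Ring A] [Algebra F A]

def IsRotaBaxter (lam : F) (R : A →ₗ[F] A) : Prop :=
  ∀ x y, R x * R y = R (R x * y + x * R y + lam • (x * y))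

namespace IsRotaBaxter

variable {lam : F} {R : A →ₗ[F] A} (hR : IsRotaBaxter lam R)
include hR

theorem apply_mul_add_smul_eq_zero {x : A} (hx : R x + lam • x = 0) (y : A) :
    R (R y * x) + lam • (R y * x) = 0 := by
  have h := hR y x
  rw [eq_neg_of_add_eq_zero_left hx] at h
  simp only [mul_neg, mul_smul_comm, add_assoc, neg_add_cancel, add_zero] at h
  rw [← h, neg_add_cancel]

theorem mul_apply_add_smul_eq_zero {x : A} (hx : R x + lam • x = 0) (y : A) :
    R (x * R y) + lam • (x * R y) = 0 := by
  have h := hR x y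
  rw [eq_neg_of_add_eq_zero_left hx] at h
  simp only [neg_mul, smul_mul_assoc, neg_add_cancel_comm] at h
  rw [← h, neg_add_cancel]

theorem mul_add_smul_eq_zero (hlam : lam ≠ 0) {x y : A} (hx : R x + lam • x = 0)
    (hy : R y + lam • y = 0) : R (x * y) + lam • (x * y) = 0 := by
  have h := hR x y
  have harg : -(lam • x) * y + x * -(lam • y) + lam • (x * y) = (-lam) • (x * y) := by
    rw [neg_mul, mul_neg, smul_mul_assoc, mul_smul_comm, neg_smul]
    abel
  rw [eq_neg_of_add_eq_zero_left hx, eq_neg_of_add_eq_zero_left hy, harg, neg_mul_neg,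
    smul_mul_smul_comm, map_smul] at h
  refine (smul_eq_zero_iff_right hlam).mp ?_
  rw [smul_add, smul_smul, h, neg_smul, add_neg_cancel]

def kerAddSMul (hlam : lam ≠ 0) : NonUnitalSubalgebra F A where
  carrier := {x | R x + lam • x = 0}
  zero_mem' := by simp
  add_mem' {x y} (hx : R x + lam • x = 0) (hy : R y + lam • y = 0) := by
    change R (x + y) + lam • (x + y) = 0
    rw [map_add, smul_add, add_add_add_comm, hx, hy, add_zero]
  smul_mem' c x (hx : R x + lam • x = 0) := by
    change R (c • x) + lam • c • x = 0
    rw [map_smul, smul_comm lam c, ← smul_add, hx, smul_zero]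
  mul_mem' := hR.mul_add_smul_eq_zero hlam

end IsRotaBaxter

end RotaBaxter

section Nilpotent

variable {F A : Type*} [Field F] [Ring A] [Algebra F A]

theorem NonUnitalSubalgebra.aeval_X_mul_mem (S : NonUnitalSubalgebra F A) {x : A} (hx : x ∈ S)
    (q : F[X]) : aeval x (X * q) ∈ S := by
  induction q using Polynomial.induction_on with
  | C a =>
    rw [mul_comm, ← smul_eq_C_mul, map_smul, aeval_X]
    exact S.smul_mem a hx
  | add p q hp hq =>
    rw [mul_add, map_add]
    exact S.add_mem hp hq
  | monomial k a ih =>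
    rw [show (X : F[X]) * (C a * X ^ (k + 1)) = X * (X * (C a * X ^ k)) by ring, map_mul,
      aeval_X]
    exact S.mul_mem hx ih

theorem exists_isIdempotentElem_aeval_X_mul_pow_eq {x : A} (hx : IsIntegral F x) :
    ∃ m > 0, ∃ q : F[X], IsIdempotentElem (aeval x (X * q)) ∧
      x ^ m = aeval x (X * q) * x ^ m := by
  obtain ⟨q, hμ, hXq⟩ :=
    (minpoly F x).exists_eq_pow_rootMultiplicity_mul_and_not_dvd (minpoly.ne_zero hx) 0
  simp only [map_zero, sub_zero] at hμ hXq
  set r := (minpoly F x).rootMultiplicity 0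
  -- `p = X ^ (r + 1) * a` is `0` modulo `X ^ (r + 1)` and `1` modulo `q`, so `p ^ 2 ≡ p`
  -- modulo `minpoly F x = X ^ r * q`.
  obtain ⟨a, b, hab⟩ := ((prime_X.coprime_iff_not_dvd).mpr hXq).pow_left (m := r + 1)
  have hvanish : ∀ f : F[X], aeval x (f * minpoly F x) = 0 := by simp
  refine ⟨r + 1, r.succ_pos, X ^ r * a, ?_, ?_⟩
  · have hpoly : (X * (X ^ r * a)) * (X * (X ^ r * a)) =
        X * (X ^ r * a) + (-(X * a * b)) * minpoly F x := by
      rw [hμ]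
      linear_combination (X * X ^ r * a) * hab
    rw [IsIdempotentElem, ← map_mul, hpoly, map_add, hvanish, add_zero]
  · have hpoly : (X : F[X]) ^ (r + 1) =
        X * (X ^ r * a) * X ^ (r + 1) + (X * b) * minpoly F x := by
      rw [hμ]
      linear_combination (-X ^ (r + 1)) * hab
    have h := congrArg (aeval x) hpoly
    rwa [map_add, hvanish, add_zero, map_mul, map_pow, aeval_X] at h

theorem NonUnitalSubalgebra.exists_pos_pow_eq_zero_of_isIdempotentElem_eq_zero
    [Module.Finite F A] (S : NonUnitalSubalgebra F A)
    (hS : ∀ e ∈ S, IsIdempotentElem e → e = 0) {x : A} (hx : x ∈ S) : ∃ m, 0 < m ∧ x ^ m = 0 := by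
  obtain ⟨m, hm, q, hidem, hxm⟩ := exists_isIdempotentElem_aeval_X_mul_pow_eq (.of_finite F x)
  rw [hS _ (S.aeval_X_mul_mem hx q) hidem, zero_mul] at hxm
  exact ⟨m, hm, hxm⟩

end Nilpotent

section Trace

variable {ι F : Type*} [Fintype ι] [DecidableEq ι] [Field F]

theorem Matrix.trace_eq_finrank_range_of_isIdempotentElem {e : Matrix ι ι F}
    (he : IsIdempotentElem (Matrix.toLin' e)) :
    e.trace = Module.finrank F (LinearMap.range e.toLin') := by
  rw [← Matrix.trace_toLin'_eq, (LinearMap.IsIdempotentElem.isProj_range _ he).trace]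

theorem Matrix.eq_zero_of_isIdempotentElem_of_trace_eq_neg_sq [CharZero F] {e : Matrix ι ι F}
    (he : IsIdempotentElem e) (htr : e.trace = -e.trace ^ 2) : e = 0 := by
  have he' : IsIdempotentElem e.toLin' := he.map Matrix.toLinAlgEquiv'
  have hd : e.trace = 0 := by
    rw [Matrix.trace_eq_finrank_range_of_isIdempotentElem he'] at htr ⊢
    set d := Module.finrank F (LinearMap.range e.toLin')
    have h : (d : F) * ((d + 1 : ℕ) : F) = 0 := by
      push_cast
      linear_combination htr
    exact (mul_eq_zero.mp h).resolve_right (Nat.cast_ne_zero.mpr d.succ_ne_zero)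
  rw [← Matrix.trace_toLin'_eq, LinearMap.IsIdempotentElem.trace_eq_zero_iff he'] at hd
  exact Matrix.toLin'.injective (hd.trans (map_zero _).symm)

theorem Matrix.trace_mul_eq_neg_trace_mul_trace_of_skew {lam : F} (hlam : lam ≠ 0)
    {R Rs : Matrix ι ι F → Matrix ι ι F} (hadj : ∀ x y, (R x * y).trace = (x * Rs y).trace)
    (hskew : ∀ x, R x + Rs x + lam • x = (lam * x.trace) • (1 : Matrix ι ι F))
    {u v : Matrix ι ι F} (hu : R u + lam • u = 0) (hv : R v + lam • v = 0) :
    (u * v).trace = -(u.trace * v.trace) := by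
  have hRu : R u = -(lam • u) := eq_neg_of_add_eq_zero_left hu
  have hRsv : Rs v = (lam * v.trace) • 1 := by
    rw [← hskew v, add_right_comm, hv, zero_add]
  have h := hadj u v
  rw [hRu, hRsv, neg_mul, smul_mul_assoc, mul_smul_comm, mul_one, Matrix.trace_neg,
    Matrix.trace_smul, Matrix.trace_smul, smul_eq_mul, smul_eq_mul] at h
  exact mul_left_cancel₀ hlam (by linear_combination -h)

end Trace

/-- Let `R` be a `λ`-skew-symmetric Rota–Baxter operator of weight `λ ≠ 0` on
`Mₙ(F)` (char F = 0) and `I₂' = ker(R + λ·id)`. Then `I₂'` contains no nonzero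
idempotent; in particular `I₂'` is a nil ideal of the subalgebra `R(Mₙ(F))`. -/
theorem ker_R_add_lam_nil_ideal {F : Type*} [Field F] [CharZero F] {n : ℕ}
    (lam : F) (hlam : lam ≠ 0)
    (R Rs : Matrix (Fin n) (Fin n) F →ₗ[F] Matrix (Fin n) (Fin n) F)
    (hRB : ∀ x y, R x * R y = R (R x * y + x * R y + lam • (x * y)))
    (hadj : ∀ x y, (R x * y).trace = (x * Rs y).trace)
    (hskew : ∀ x, R x + Rs x + lam • x = (lam * x.trace) • (1 : Matrix (Fin n) (Fin n) F)) :
    (∀ e : Matrix (Fin n) (Fin n) F, R e + lam • e = 0 → e * e = e → e = 0) ∧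
    (∀ x : Matrix (Fin n) (Fin n) F, R x + lam • x = 0 → ∃ m : ℕ, 0 < m ∧ x ^ m = 0) ∧
    (∀ x y : Matrix (Fin n) (Fin n) F, R x + lam • x = 0 →
        (R (R y * x) + lam • (R y * x) = 0 ∧ R (x * R y) + lam • (x * R y) = 0)) := by
  have hR : IsRotaBaxter lam R := hRB
  have hidem : ∀ e, R e + lam • e = 0 → IsIdempotentElem e → e = 0 := by
    intro e he hee
    refine Matrix.eq_zero_of_isIdempotentElem_of_trace_eq_neg_sq hee ?_
    have htr := Matrix.trace_mul_eq_neg_trace_mul_trace_of_skew hlam hadj hskew he he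
    rw [hee.eq] at htr
    linear_combination htr
  refine ⟨hidem, fun x hx => ?_, fun x y hx => ?_⟩
  · exact (hR.kerAddSMul hlam).exists_pos_pow_eq_zero_of_isIdempotentElem_eq_zero hidem hx
  · exact ⟨hR.apply_mul_add_smul_eq_zero hx y, hR.mul_apply_add_smul_eq_zero hx y⟩
end

section
/- Define a double bracket on V = F[t] by ⟦tⁿ, tᵐ⟧ = -(tⁿ ⊗ t^{m+1} - tᵐ ⊗ t^{n+1})/(t⊗1 - 1⊗t), i.e., ⟦tⁿ,tᵐ⟧ = -(tᵐ⊗tⁿ + t^{m+1}⊗t^{n-1} + ... + t^{n-1}⊗t^{m+1}) for m < n and ⟦tⁿ,tᵐ⟧ = tⁿ⊗tᵐ + t^{n+1}⊗t^{m-1} + ... + t^{m-1}⊗t^{n+1} for m ≥ n. Then this bracket satisfies the 1-double Lie anti-commutativity: ⟦a,b⟧ + τ(⟦b,a⟧) = a⊗b - b⊗a for all a,b ∈ F[t], where τ is the tensor switch. -/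
open scoped TensorProduct

/-- The bracket `⟦tⁿ, tᵐ⟧ = -(tⁿ ⊗ t^{m+1} - tᵐ ⊗ t^{n+1})/(t⊗1 - 1⊗t)` on
monomials: for `n ≤ m` it is `Σ_{j<m-n} t^{n+j} ⊗ t^{m-j}` and for `m < n` it is
`-Σ_{k<n-m} t^{m+k} ⊗ t^{n-k}`. -/
noncomputable def brMono (F : Type*) [Field F] (n m : ℕ) :
    Polynomial F ⊗[F] Polynomial F :=
  if n ≤ m then
    ∑ j ∈ Finset.range (m - n), (Polynomial.X ^ (n + j)) ⊗ₜ[F] (Polynomial.X ^ (m - j))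
  else
    -∑ k ∈ Finset.range (n - m), (Polynomial.X ^ (m + k)) ⊗ₜ[F] (Polynomial.X ^ (n - k))

/-- The bilinear extension of `brMono` to `F[t]`. -/
noncomputable def Dbr (F : Type*) [Field F] :
    Polynomial F →ₗ[F] Polynomial F →ₗ[F] (Polynomial F ⊗[F] Polynomial F) :=
  (Polynomial.basisMonomials F).constr F fun n =>
    (Polynomial.basisMonomials F).constr F fun m => brMono F n m

open Polynomial

theorem Polynomial.basisMonomials_apply_eq_X_pow {R : Type*} [Semiring R] (k : ℕ) :
    basisMonomials R k = X ^ k := by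
  rw [coe_basisMonomials, X_pow_eq_monomial]

section

variable (F : Type*) [Field F]

/-- For `n ≤ m`, the swapped sum `τ ⟦tᵐ, tⁿ⟧` is the sum `⟦tⁿ, tᵐ⟧` shifted by one index,
so the two telescope to the first minus the last term. -/
theorem brMono_add_comm_brMono_of_le {n m : ℕ} (h : n ≤ m) :
    brMono F n m + TensorProduct.comm F F[X] F[X] (brMono F m n)
      = (X ^ n) ⊗ₜ[F] (X ^ m) - (X ^ m) ⊗ₜ[F] (X ^ n) := by
  rcases h.eq_or_lt with rfl | hlt
  · simp [brMono]
  set f : ℕ → F[X] ⊗[F] F[X] := fun j => (X ^ (n + j)) ⊗ₜ[F] (X ^ (m - j))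
  have hswap : TensorProduct.comm F F[X] F[X] (brMono F m n)
      = -∑ j ∈ Finset.range (m - n), f (j + 1) := by
    rw [brMono, if_neg hlt.not_ge, map_neg, map_sum, ← Finset.sum_range_reflect]
    refine congrArg Neg.neg (Finset.sum_congr rfl fun j hj => ?_)
    rw [Finset.mem_range] at hj
    rw [TensorProduct.comm_tmul]
    congr 2 <;> omega
  rw [hswap, brMono, if_pos h, ← sub_eq_add_neg, ← Finset.sum_sub_distrib,
    Finset.sum_range_sub' f]
  simp only [f, Nat.add_zero, Nat.sub_zero, Nat.add_sub_cancel' h, Nat.sub_sub_self h]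

theorem brMono_add_comm_brMono (n m : ℕ) :
    brMono F n m + TensorProduct.comm F F[X] F[X] (brMono F m n)
      = (X ^ n) ⊗ₜ[F] (X ^ m) - (X ^ m) ⊗ₜ[F] (X ^ n) := by
  rcases le_total n m with h | h
  · exact brMono_add_comm_brMono_of_le F h
  · have hswapped := congrArg (TensorProduct.comm F F[X] F[X])
      (brMono_add_comm_brMono_of_le F h)
    rw [map_add, TensorProduct.comm_comm, map_sub, TensorProduct.comm_tmul,
      TensorProduct.comm_tmul] at hswapped
    rw [add_comm, hswapped]

theorem Dbr_X_pow_X_pow (n m : ℕ) : Dbr F (X ^ n) (X ^ m) = brMono F n m := by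
  rw [← basisMonomials_apply_eq_X_pow, ← basisMonomials_apply_eq_X_pow, Dbr,
    Module.Basis.constr_basis, Module.Basis.constr_basis]

end

/-- The double bracket `⟦tⁿ,tᵐ⟧ = -(tⁿ⊗t^{m+1} - tᵐ⊗t^{n+1})/(t⊗1-1⊗t)` on `F[t]`
satisfies the `1`-double Lie anti-commutativity
`⟦a,b⟧ + τ(⟦b,a⟧) = a⊗b - b⊗a`. -/
theorem Dbr_one_anticomm (F : Type*) [Field F] :
    ∀ a b : Polynomial F,
      Dbr F a b + (TensorProduct.comm F (Polynomial F) (Polynomial F)) (Dbr F b a)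
        = a ⊗ₜ[F] b - b ⊗ₜ[F] a := by
  have hbilin : Dbr F + (Dbr F).flip.compr₂ (TensorProduct.comm F F[X] F[X]).toLinearMap
      + (TensorProduct.mk F F[X] F[X]).flip = TensorProduct.mk F F[X] F[X] := by
    refine LinearMap.ext_basis (basisMonomials F) (basisMonomials F) fun n m => ?_
    simpa only [basisMonomials_apply_eq_X_pow, LinearMap.add_apply, LinearMap.compr₂_apply,
      LinearMap.flip_apply, TensorProduct.mk_apply, LinearEquiv.coe_coe, Dbr_X_pow_X_pow,
      ← eq_sub_iff_add_eq] using brMono_add_comm_brMono F n m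
  intro a b
  simpa [eq_sub_iff_add_eq] using LinearMap.congr_fun₂ hbilin a b
end

section
/- The 1-double Lie algebra M₁ = F[t] with bracket ⟦tⁿ,tᵐ⟧ = -(tⁿ⊗t^{m+1} - tᵐ⊗t^{n+1})/(t⊗1-1⊗t) has exactly one nonzero proper ideal, namely I = tF[t], and the linear map ξ : M₁ → I given by ξ(tⁿ) = t^{n+1} is an isomorphism of double Lie algebras from M₁ onto I. -/
open scoped TensorProduct

/-- The submodule `W ⊗ V + V ⊗ W` of `V ⊗ V` for `V = F[t]`. -/
noncomputable def sideTensor (F : Type*) [Field F] (W : Submodule F (Polynomial F)) :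
    Submodule F (Polynomial F ⊗[F] Polynomial F) :=
  LinearMap.range (LinearMap.rTensor (Polynomial F) W.subtype) ⊔
    LinearMap.range (LinearMap.lTensor (Polynomial F) W.subtype)

/-- `W` is an ideal of the double Lie algebra `(F[t], Dbr)`:
`⟦V,W⟧ + ⟦W,V⟧ ⊆ W ⊗ V + V ⊗ W`. -/
def IsDblIdeal (F : Type*) [Field F] (W : Submodule F (Polynomial F)) : Prop :=
  ∀ a b : Polynomial F, b ∈ W →
    Dbr F a b ∈ sideTensor F W ∧ Dbr F b a ∈ sideTensor F W

/-!
Every right tensor factor of `⟦tⁿ, tᵐ⟧` has positive degree, so `⟦V, V⟧ ⊆ V ⊗ I` and `I` is an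
ideal; it is a hyperplane, the kernel of the constant coefficient.

Conversely, let `W` be an ideal and `g` a functional vanishing on `W`. Contracting the right
tensor factor against `g` maps `W ⊗ V + V ⊗ W` into `W`. Applied to
`⟦t^{k+2}, t^k⟧ = -(t^k ⊗ t^{k+2} + t^{k+1} ⊗ t^{k+1})` and followed by `g`, this gives
`g(t^{k+1})² = 0` when `t^k ∈ W`, so `t^k ∈ W → t^{k+1} ∈ W`. Applied to `⟦1, b⟧` it gives an
element of `W` of degree `< deg b` whose coefficient of `t^{deg b - 1}` is `g(t) · lead(b)`;
by induction on the degree, `t ∈ W` as soon as `W ≠ 0`. Hence `I ⊆ W`, and `W = I` when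
`W ≠ V` because `I` is a hyperplane.

Multiplication by `t` raises both exponents in `⟦tⁿ, tᵐ⟧` by one, which makes `ξ` a
homomorphism.
-/

namespace M1

open Polynomial

variable {F : Type*} [Field F]

lemma basisMonomials_apply (k : ℕ) : basisMonomials F k = X ^ k := by
  rw [coe_basisMonomials, X_pow_eq_monomial]

lemma Dbr_X_pow (n m : ℕ) : Dbr F (X ^ n) (X ^ m) = brMono F n m := by
  simp only [Dbr, ← basisMonomials_apply, Module.Basis.constr_basis]

lemma Dbr_mem_of_forall_brMono_mem {S : Submodule F (F[X] ⊗[F] F[X])}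
    (h : ∀ n m, brMono F n m ∈ S) (a b : F[X]) : Dbr F a b ∈ S := by
  have hzero : (Dbr F).compr₂ S.mkQ = 0 :=
    LinearMap.ext_basis (basisMonomials F) (basisMonomials F) fun n m => by
      simpa [basisMonomials_apply, Dbr_X_pow] using h n m
  simpa using congr($hzero a b)

lemma brMono_add_two_self (k : ℕ) :
    brMono F (k + 2) k = -((X ^ k) ⊗ₜ[F] (X ^ (k + 2)) + (X ^ (k + 1)) ⊗ₜ[F] (X ^ (k + 1))) := by
  simp [brMono, Finset.sum_range_succ, show k + 2 - k = 2 by omega]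

lemma brMono_zero_left (m : ℕ) :
    brMono F 0 m = ∑ j ∈ Finset.range m, (X ^ j) ⊗ₜ[F] (X ^ (m - j)) := by
  simp [brMono]

lemma brMono_mem_range_lTensor (n m : ℕ) :
    brMono F n m ∈ LinearMap.range
      (LinearMap.lTensor F[X] (LinearMap.range (LinearMap.mulLeft F (X : F[X]))).subtype) := by
  have hmem : ∀ (x : F[X]) {e : ℕ}, 0 < e → x ⊗ₜ[F] (X ^ e) ∈ LinearMap.range
      (LinearMap.lTensor F[X] (LinearMap.range (LinearMap.mulLeft F (X : F[X]))).subtype) :=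
    fun x e he => ⟨x ⊗ₜ ⟨X ^ e, X ^ (e - 1), by simp [← pow_succ', Nat.sub_add_cancel he]⟩, rfl⟩
  unfold brMono
  split_ifs
  · exact Submodule.sum_mem _ fun j hj => hmem _ (by have := Finset.mem_range.mp hj; omega)
  · refine Submodule.neg_mem _ (Submodule.sum_mem _ fun k hk => hmem _ ?_)
    have := Finset.mem_range.mp hk
    omega

lemma isDblIdeal_range_mulLeft_X :
    IsDblIdeal F (LinearMap.range (LinearMap.mulLeft F (X : F[X]))) := fun a b _ =>
  ⟨Submodule.mem_sup_right (Dbr_mem_of_forall_brMono_mem brMono_mem_range_lTensor a b),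
    Submodule.mem_sup_right (Dbr_mem_of_forall_brMono_mem brMono_mem_range_lTensor b a)⟩

lemma isCoatom_range_mulLeft_X : IsCoatom (LinearMap.range (LinearMap.mulLeft F (X : F[X]))) := by
  have hker : LinearMap.range (LinearMap.mulLeft F (X : F[X])) = LinearMap.ker (lcoeff F 0) := by
    ext p
    rw [LinearMap.mem_ker, lcoeff_apply, ← X_dvd_iff, dvd_def]
    simp [eq_comm]
  rw [hker]
  exact LinearMap.isCoatom_ker_of_surjective fun c => ⟨C c, coeff_C_zero⟩

noncomputable def evalRight (g : F[X] →ₗ[F] F) : F[X] ⊗[F] F[X] →ₗ[F] F[X] :=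
  TensorProduct.rid F F[X] ∘ₗ LinearMap.lTensor F[X] g

@[simp]
lemma evalRight_tmul (g : F[X] →ₗ[F] F) (v u : F[X]) : evalRight g (v ⊗ₜ u) = g u • v := by
  simp [evalRight]

lemma evalRight_mem_of_mem_sideTensor {W : Submodule F F[X]} {g : F[X] →ₗ[F] F}
    (hg : W ≤ LinearMap.ker g) {t : F[X] ⊗[F] F[X]} (ht : t ∈ sideTensor F W) :
    evalRight g t ∈ W := by
  refine (sup_le ?_ ?_ : sideTensor F W ≤ W.comap (evalRight g)) ht
  · rintro _ ⟨z, rfl⟩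
    induction z using TensorProduct.induction_on with
    | zero => simp
    | tmul w u => simpa using W.smul_mem (g u) w.2
    | add x y hx hy => rw [map_add]; exact Submodule.add_mem _ hx hy
  · rintro _ ⟨z, rfl⟩
    induction z using TensorProduct.induction_on with
    | zero => simp
    | tmul u w => simp [LinearMap.mem_ker.mp (hg w.2)]
    | add x y hx hy => rw [map_add]; exact Submodule.add_mem _ hx hy

lemma exists_le_ker_apply_ne_zero {W : Submodule F F[X]} {x : F[X]} (hx : x ∉ W) :
    ∃ g : F[X] →ₗ[F] F, W ≤ LinearMap.ker g ∧ g x ≠ 0 := by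
  obtain ⟨g, hgx, hg⟩ := W.exists_dual_map_eq_bot_of_notMem hx inferInstance
  exact ⟨g, LinearMap.le_ker_iff_map.mpr hg, hgx⟩

lemma X_pow_succ_mem {W : Submodule F F[X]} (hW : IsDblIdeal F W) {k : ℕ}
    (hk : (X : F[X]) ^ k ∈ W) : (X : F[X]) ^ (k + 1) ∈ W := by
  by_contra hk1
  obtain ⟨g, hg, hgk1⟩ := exists_le_ker_apply_ne_zero hk1
  have hmem := evalRight_mem_of_mem_sideTensor hg (hW (X ^ (k + 2)) (X ^ k) hk).1
  have hzero := LinearMap.mem_ker.mp (hg hmem)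
  rw [Dbr_X_pow, brMono_add_two_self] at hzero
  exact hgk1 (by simpa [LinearMap.mem_ker.mp (hg hk)] using hzero)

lemma coeff_evalRight_Dbr_one (g : F[X] →ₗ[F] F) (b : F[X]) (e : ℕ) :
    (evalRight g (Dbr F 1 b)).coeff e =
      ∑ m ∈ Finset.range (b.natDegree + 1), b.coeff m * if e < m then g (X ^ (m - e)) else 0 := by
  conv_lhs => rw [b.as_sum_range' _ (Nat.lt_succ_self _), ← pow_zero X]
  simp only [← smul_X_eq_monomial, map_sum, map_smul, Dbr_X_pow, brMono_zero_left,
    evalRight_tmul, finsetSum_coeff, coeff_smul, coeff_X_pow, smul_eq_mul]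
  refine Finset.sum_congr rfl fun m _ => ?_
  simp

lemma X_mem_of_ne_zero_mem {W : Submodule F F[X]} (hW : IsDblIdeal F W) {b : F[X]}
    (hb : b ∈ W) (hb0 : b ≠ 0) : (X : F[X]) ∈ W := by
  induction hd : b.natDegree using Nat.strong_induction_on generalizing b with
  | _ d ih =>
  rcases Nat.eq_zero_or_pos d with rfl | hd0
  · have hone : (1 : F[X]) ∈ W := by
      rw [eq_C_of_natDegree_eq_zero hd] at hb hb0
      have hc : b.coeff 0 ≠ 0 := by simpa using hb0
      simpa [smul_eq_C_mul, ← C_mul, hc] using W.smul_mem (b.coeff 0)⁻¹ hb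
    simpa using X_pow_succ_mem hW (k := 0) (by simpa using hone)
  by_contra hX
  obtain ⟨g, hg, hgX⟩ := exists_le_ker_apply_ne_zero hX
  set w := evalRight g (Dbr F 1 b)
  have hw : w ∈ W := evalRight_mem_of_mem_sideTensor hg (hW 1 b hb).1
  have hcoeff_high : ∀ e, d ≤ e → w.coeff e = 0 := fun e he => by
    rw [coeff_evalRight_Dbr_one, hd]
    refine Finset.sum_eq_zero fun m hm => ?_
    rw [if_neg (by have := Finset.mem_range.mp hm; omega), mul_zero]
  have hcoeff_top : w.coeff (d - 1) = b.coeff d * g X := by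
    rw [coeff_evalRight_Dbr_one, hd, Finset.sum_eq_single d, if_pos (by omega),
      Nat.sub_sub_self hd0, pow_one]
    · intro m hm hmd
      rw [if_neg (by have := Finset.mem_range.mp hm; omega), mul_zero]
    · simp
  have hwd : w.natDegree < d := by
    have : w.natDegree ≤ d - 1 :=
      natDegree_le_iff_coeff_eq_zero.mpr fun e he => hcoeff_high e (by omega)
    omega
  have hw0 : w ≠ 0 := by
    intro h
    rw [h, coeff_zero, eq_comm, mul_eq_zero, ← hd] at hcoeff_top
    exact hcoeff_top.elim (leadingCoeff_ne_zero.mpr hb0) hgX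
  exact hX (ih _ hwd hw hw0 rfl)

lemma range_mulLeft_X_le {W : Submodule F F[X]} (hW : IsDblIdeal F W) (hX : (X : F[X]) ∈ W) :
    LinearMap.range (LinearMap.mulLeft F (X : F[X])) ≤ W := by
  have hpow : ∀ k, (X : F[X]) ^ (k + 1) ∈ W := fun k => by
    induction k with
    | zero => simpa using hX
    | succ k ih => exact X_pow_succ_mem hW ih
  rintro _ ⟨p, rfl⟩
  induction p using Polynomial.induction_on' with
  | add p q hp hq => rw [map_add]; exact W.add_mem hp hq
  | monomial n c =>
    rw [← smul_X_eq_monomial, map_smul, LinearMap.mulLeft_apply, ← pow_succ']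
    exact W.smul_mem c (hpow n)

lemma map_mulLeft_X_brMono (n m : ℕ) :
    TensorProduct.map (LinearMap.mulLeft F X) (LinearMap.mulLeft F X) (brMono F n m) =
      brMono F (n + 1) (m + 1) := by
  rw [brMono, brMono]
  by_cases h : n ≤ m
  · rw [if_pos h, if_pos (by omega), map_sum, show m + 1 - (n + 1) = m - n by omega]
    refine Finset.sum_congr rfl fun j hj => ?_
    rw [Finset.mem_range] at hj
    simp only [TensorProduct.map_tmul, LinearMap.mulLeft_apply, ← pow_succ']
    rw [show n + j + 1 = n + 1 + j by omega, show m - j + 1 = m + 1 - j by omega]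
  · rw [if_neg h, if_neg (by omega), map_neg, map_sum, show n + 1 - (m + 1) = n - m by omega]
    refine congrArg _ (Finset.sum_congr rfl fun k hk => ?_)
    rw [Finset.mem_range] at hk
    simp only [TensorProduct.map_tmul, LinearMap.mulLeft_apply, ← pow_succ']
    rw [show m + k + 1 = m + 1 + k by omega, show n - k + 1 = n + 1 - k by omega]

lemma map_mulLeft_X_Dbr (a b : F[X]) :
    TensorProduct.map (LinearMap.mulLeft F X) (LinearMap.mulLeft F X) (Dbr F a b) =
      Dbr F (LinearMap.mulLeft F X a) (LinearMap.mulLeft F X b) := by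
  have hext :
      (Dbr F).compr₂ (TensorProduct.map (LinearMap.mulLeft F X) (LinearMap.mulLeft F X)) =
      (Dbr F).compl₁₂ (LinearMap.mulLeft F X) (LinearMap.mulLeft F X) :=
    LinearMap.ext_basis (basisMonomials F) (basisMonomials F) fun n m => by
      simp [basisMonomials_apply, Dbr_X_pow, map_mulLeft_X_brMono, ← pow_succ']
  exact congr($hext a b)

end M1

/-- The 1-double Lie algebra `M₁ = F[t]` has exactly one nonzero proper ideal,
namely `I = tF[t]`, and `ξ : tⁿ ↦ t^{n+1}` is an isomorphism of double Lie
algebras from `M₁` onto `I`. -/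
theorem M1_unique_ideal (F : Type*) [Field F] :
    IsDblIdeal F (LinearMap.range (LinearMap.mulLeft F (Polynomial.X : Polynomial F))) ∧
    LinearMap.range (LinearMap.mulLeft F (Polynomial.X : Polynomial F)) ≠ ⊥ ∧
    LinearMap.range (LinearMap.mulLeft F (Polynomial.X : Polynomial F)) ≠ ⊤ ∧
    (∀ W : Submodule F (Polynomial F), IsDblIdeal F W → W ≠ ⊥ → W ≠ ⊤ →
      W = LinearMap.range (LinearMap.mulLeft F (Polynomial.X : Polynomial F))) ∧
    (∃ ξ : Polynomial F →ₗ[F] Polynomial F,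
      (∀ n : ℕ, ξ (Polynomial.X ^ n) = Polynomial.X ^ (n + 1)) ∧
      Function.Injective ξ ∧
      LinearMap.range ξ =
        LinearMap.range (LinearMap.mulLeft F (Polynomial.X : Polynomial F)) ∧
      (∀ a b : Polynomial F,
        TensorProduct.map ξ ξ (Dbr F a b) = Dbr F (ξ a) (ξ b))) := by
  have hcoatom := M1.isCoatom_range_mulLeft_X (F := F)
  refine ⟨M1.isDblIdeal_range_mulLeft_X, ?_, hcoatom.1, fun W hW hbot htop => ?_,
    LinearMap.mulLeft F Polynomial.X, fun n => (pow_succ' _ n).symm,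
    mul_right_injective₀ Polynomial.X_ne_zero, rfl, M1.map_mulLeft_X_Dbr⟩
  · exact (Submodule.ne_bot_iff _).mpr ⟨_, ⟨1, mul_one _⟩, Polynomial.X_ne_zero⟩
  · obtain ⟨b, hb, hb0⟩ := (Submodule.ne_bot_iff W).mp hbot
    exact (hcoatom.le_iff_eq htop).mp
      (M1.range_mulLeft_X_le hW (M1.X_mem_of_ne_zero_mem hW hb hb0))
end
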